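/- Let X, Y be separable Banach spaces, G ⊆ X open, and f : G → Y an arbitrary mapping. Then there exists a σ-upper porous set A ⊆ G such that for every x ∈ G \ A: if f is Lipschitz at x and there exist a finite-dimensional subspace Vˣ of X and a topological complement Wˣ of Vˣ such that f is Fréchet differentiable at x along both Vˣ and Wˣ, then f is Fréchet differentiable at x. -/

import Mathlib

open Metric Set Topology

variable {X Y : Type*} [NormedAddCommGroup X] [NormedSpace ℝ X] [CompleteSpace X]
  [NormedAddCommGroup Y] [NormedSpace ℝ Y] [CompleteSpace Y]

/-- `f` is Fréchet differentiable at `a` along the subspace `V`. -/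
def FrechetDiffAlong (f : X → Y) (V : Submodule ℝ X) (a : X) : Prop :=
  DifferentiableAt ℝ (fun v : V => f (a + (v : X))) (0 : V)

/-- `f` is Lipschitz at `x`. -/
def LipschitzAtPt (f : X → Y) (x : X) : Prop :=
  ∃ L : ℝ, ∀ᶠ y in nhds x, ‖f y - f x‖ ≤ L * ‖y - x‖

/-- `A` is (upper) porous at `x`. -/
def PorousAt (A : Set X) (x : X) : Prop :=
  ∃ c > (0 : ℝ), ∀ δ > (0 : ℝ), ∃ t, t ∈ ball x δ ∧ t ≠ x ∧ ball t (c * dist t x) ∩ A = ∅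

/-- `A` is (upper) porous: porous at each of its points. -/
def Porous (A : Set X) : Prop := ∀ x ∈ A, PorousAt A x

/-- `A` is σ-(upper) porous: a countable union of porous sets. -/
def SigmaPorous (A : Set X) : Prop :=
  ∃ u : ℕ → Set X, (∀ n, Porous (u n)) ∧ A = ⋃ n, u n


/-!
At an exceptional point `x` the splitting `X = V ⊕ W`, the partial derivatives `S` along `V` and
`R` along `W`, a Lipschitz constant and the failure `ε` of differentiability are quantitative data.
Coordinates `j : ℝᵏ → V` make these data live in separable spaces, so countably many pieces
suffice in which the data `(j, S)` of any two points are `γ`-close. Each piece is porous: choose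
`h` with `‖f (x + h) - f x - (S (q h) + R (h - j (q h)))‖ > ε ‖h‖`; a point `z` of the piece with
`‖z - (x + h)‖ < γ ‖h‖` would give the opposite bound, by going from `x + h` to `z` (Lipschitz at
`z`), then along `V' = range j'` (derivative at `z`, close to `S`) to a point `x + w` with `w ∈ W`
(derivative at `x`).
-/

section Porosity

variable {E : Type*} [NormedAddCommGroup E]

theorem PorousAt.mono {A B : Set E} {x : E} (hBA : B ⊆ A) (hA : PorousAt A x) : PorousAt B x := by
  obtain ⟨c, hc, hA⟩ := hA
  refine ⟨c, hc, fun δ hδ => ?_⟩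
  obtain ⟨t, ht, htx, hball⟩ := hA δ hδ
  exact ⟨t, ht, htx, subset_empty_iff.mp (hball ▸ inter_subset_inter_right _ hBA)⟩

theorem Porous.mono {A B : Set E} (hBA : B ⊆ A) (hA : Porous A) : Porous B :=
  fun x hx => (hA x (hBA hx)).mono hBA

theorem SigmaPorous.mono {A B : Set E} (hBA : B ⊆ A) (hA : SigmaPorous A) : SigmaPorous B := by
  obtain ⟨u, hu, rfl⟩ := hA
  exact ⟨fun n => B ∩ u n, fun n => (hu n).mono inter_subset_right,
    by rw [← inter_iUnion, inter_eq_left.mpr hBA]⟩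

theorem SigmaPorous.iUnion {ι : Type*} [Countable ι] [Nonempty ι] {B : ι → Set E}
    (hB : ∀ i, Porous (B i)) : SigmaPorous (⋃ i, B i) := by
  obtain ⟨g, hg⟩ := exists_surjective_nat ι
  exact ⟨fun n => B (g n), fun n => hB (g n), (hg.iUnion_comp B).symm⟩

end Porosity

section LinearAlgebra

variable {E : Type*} [NormedAddCommGroup E] [NormedSpace ℝ E]

theorem LinearMap.exists_apply_eq_and_norm_le [FiniteDimensional ℝ E] (T : E →ₗ[ℝ] E) {C : ℝ}
    (hT : ∀ a, ‖a‖ ≤ C * ‖T a‖) (b : E) : ∃ a, T a = b ∧ ‖a‖ ≤ C * ‖b‖ := by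
  have hinj : Function.Injective T :=
    (injective_iff_map_eq_zero T).mpr fun a ha => norm_le_zero_iff.mp (by simpa [ha] using hT a)
  obtain ⟨a, rfl⟩ := LinearMap.injective_iff_surjective.mp hinj b
  exact ⟨a, rfl, hT a⟩

theorem exists_coordinates_of_isCompl {V W : Submodule ℝ E} [FiniteDimensional ℝ V]
    (hW : IsClosed (W : Set E)) (hVW : IsCompl V W) :
    ∃ (k : ℕ) (e : (Fin k → ℝ) ≃L[ℝ] V) (q : E →L[ℝ] (Fin k → ℝ)),
      (∀ a, q (e a) = a) ∧ ∀ u, q u = 0 ↔ u ∈ W := by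
  have hTop : V.IsTopCompl W :=
    (Submodule.IsCompl.isTopCompl_of_isClosed_of_finiteDimensional hVW.symm hW).symm
  let e : V ≃L[ℝ] (Fin (Module.finrank ℝ V) → ℝ) :=
    (Module.finBasis ℝ V).equivFun.toContinuousLinearEquiv
  refine ⟨_, e.symm, e ∘L V.projectionOntoL W hTop, fun a => by simp, fun u => ?_⟩
  simp

theorem norm_le_two_mul_norm_apply_of_norm_sub_le {G : Type*} [NormedAddCommGroup G]
    [NormedSpace ℝ G] {j j' : G →L[ℝ] E} {q : E →L[ℝ] G} {K γ : ℝ} (hqj : ∀ a, q (j a) = a)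
    (hq : ‖q‖ ≤ K) (hjj' : ‖j' - j‖ ≤ γ) (hKγ : 2 * K * γ ≤ 1) (a : G) :
    ‖a‖ ≤ 2 * ‖q (j' a)‖ := by
  have hsplit : a = q (j' a) - q ((j' - j) a) := by simp [hqj]
  have hperturb : ‖q ((j' - j) a)‖ ≤ K * (γ * ‖a‖) :=
    q.le_of_opNorm_le hq _ |>.trans
      (mul_le_mul_of_nonneg_left ((j' - j).le_of_opNorm_le hjj' a) ((norm_nonneg q).trans hq))
  have := norm_sub_le (q (j' a)) (q ((j' - j) a))
  rw [← hsplit] at this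
  nlinarith [norm_nonneg a]

theorem exists_apply_eq_and_norm_sub_le {G : Type*} [NormedAddCommGroup G] [NormedSpace ℝ G]
    [FiniteDimensional ℝ G] {j j' : G →L[ℝ] E} {q : E →L[ℝ] G} {K γ : ℝ}
    (hqj : ∀ a, q (j a) = a) (hq : ‖q‖ ≤ K) (hjj' : ‖j' - j‖ ≤ γ) (hK : 1 ≤ K) (hγ : 0 ≤ γ)
    (hKγ : 2 * K * γ ≤ 1) {h d : E} (hd : ‖d‖ ≤ γ * ‖h‖) :
    ∃ a, q (j' a) = q (h + d) ∧ ‖a‖ ≤ 4 * K * ‖h‖ ∧ ‖a - q h‖ ≤ 4 * K ^ 2 * γ * ‖h‖ := by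
  have hγh : 0 ≤ γ * ‖h‖ := mul_nonneg hγ (norm_nonneg h)
  have hK2 : K ≤ K ^ 2 := by nlinarith
  have hlow := norm_le_two_mul_norm_apply_of_norm_sub_le hqj hq hjj' hKγ
  obtain ⟨a, hqa, ha⟩ := (q ∘L j' : G →ₗ[ℝ] G).exists_apply_eq_and_norm_le hlow (q (h + d))
  change q (j' a) = q (h + d) at hqa
  refine ⟨a, hqa, ?_, ?_⟩
  · have hhd : ‖h + d‖ ≤ 2 * ‖h‖ := (norm_add_le _ _).trans (by nlinarith [norm_nonneg h])
    have := q.le_of_opNorm_le hq (h + d)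
    nlinarith [norm_nonneg (h + d), norm_nonneg h]
  have hcomp : q (j' (a - q h)) = q d + q ((j - j') (q h)) := by
    simp only [map_sub, hqa, map_add, FunLike.coe_sub, Pi.sub_apply, hqj]
    abel
  have h1 : ‖q d‖ ≤ K * (γ * ‖h‖) := q.le_of_opNorm_le hq d |>.trans (by gcongr)
  have h2 : ‖q ((j - j') (q h))‖ ≤ K * (γ * (K * ‖h‖)) := by
    refine q.le_of_opNorm_le hq _ |>.trans ?_
    gcongr
    refine (j - j').le_of_opNorm_le (norm_sub_rev j j' ▸ hjj') _ |>.trans ?_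
    gcongr
    exact q.le_of_opNorm_le hq h
  calc ‖a - q h‖ ≤ 2 * ‖q d + q ((j - j') (q h))‖ := hcomp ▸ hlow _
    _ ≤ 2 * (K * (γ * ‖h‖) + K * (γ * (K * ‖h‖))) := by gcongr; exact norm_add_le_of_le h1 h2
    _ ≤ 4 * K ^ 2 * γ * ‖h‖ := by nlinarith [mul_le_mul_of_nonneg_right hK2 hγh]

theorem exists_decomposition_of_norm_sub_le {G : Type*} [NormedAddCommGroup G] [NormedSpace ℝ G]
    [FiniteDimensional ℝ G] {j j' : G →L[ℝ] E} {q : E →L[ℝ] G} {K γ : ℝ}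
    (hqj : ∀ a, q (j a) = a) (hq : ‖q‖ ≤ K) (hj' : ‖j'‖ ≤ K) (hjj' : ‖j' - j‖ ≤ γ) (hK : 1 ≤ K)
    (hγ : 0 ≤ γ) (hKγ : 2 * K * γ ≤ 1) {h d : E} (hd : ‖d‖ ≤ γ * ‖h‖) :
    ∃ a w, h + d = j' a + w ∧ q w = 0 ∧ ‖a‖ ≤ 4 * K * ‖h‖ ∧
      ‖a - q h‖ ≤ 4 * K ^ 2 * γ * ‖h‖ ∧ ‖w‖ ≤ 6 * K ^ 2 * ‖h‖ ∧
      ‖w - (h - j (q h))‖ ≤ 6 * K ^ 3 * γ * ‖h‖ := by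
  obtain ⟨a, hqa, ha, hav⟩ := exists_apply_eq_and_norm_sub_le hqj hq hjj' hK hγ hKγ hd
  have hγh : 0 ≤ γ * ‖h‖ := mul_nonneg hγ (norm_nonneg h)
  have hK2 : K ≤ K ^ 2 := by nlinarith
  have hK3 : K ^ 2 ≤ K ^ 3 := by nlinarith
  refine ⟨a, h + d - j' a, by abel, by simp [hqa], ha, hav, ?_, ?_⟩
  · have hhd : ‖h + d‖ ≤ 2 * ‖h‖ := (norm_add_le _ _).trans (by nlinarith [norm_nonneg h])
    calc ‖h + d - j' a‖ ≤ 2 * ‖h‖ + K * (4 * K * ‖h‖) :=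
          norm_sub_le_of_le hhd (j'.le_of_opNorm_le hj' a |>.trans (by gcongr))
      _ ≤ 6 * K ^ 2 * ‖h‖ := by nlinarith [mul_le_mul_of_nonneg_right hK2 (norm_nonneg h)]
  have hident : h + d - j' a - (h - j (q h)) = d - j' (a - q h) - (j' - j) (q h) := by
    simp only [map_sub, FunLike.coe_sub, Pi.sub_apply]; abel
  have h1 : ‖j' (a - q h)‖ ≤ K * (4 * K ^ 2 * γ * ‖h‖) :=
    j'.le_of_opNorm_le hj' _ |>.trans (by gcongr)
  have h2 : ‖(j' - j) (q h)‖ ≤ γ * (K * ‖h‖) :=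
    (j' - j).le_of_opNorm_le hjj' _ |>.trans (by gcongr; exact q.le_of_opNorm_le hq h)
  rw [hident]
  calc ‖d - j' (a - q h) - (j' - j) (q h)‖
      ≤ γ * ‖h‖ + K * (4 * K ^ 2 * γ * ‖h‖) + γ * (K * ‖h‖) :=
        norm_sub_le_of_le (norm_sub_le_of_le hd h1) h2
    _ ≤ 6 * K ^ 3 * γ * ‖h‖ := by
        nlinarith [mul_le_mul_of_nonneg_right (hK2.trans hK3) hγh,
          mul_le_mul_of_nonneg_right ((hK.trans hK2).trans hK3) hγh]

end LinearAlgebra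

section ExceptionalDatum

variable {E F : Type*} [NormedAddCommGroup E] [NormedSpace ℝ E] [NormedAddCommGroup F]
  [NormedSpace ℝ F]

/-- Quantitative data at a point `x` where `f` is Lipschitz and differentiable along `V` and `W`
but not differentiable: `j` parametrizes `V` by coordinates, `q` is the coordinate map with kernel
`W`, `S` and `R` are the derivatives along `V` (in coordinates) and along `W`, up to error `γ` on
the `δ`-ball, and `ε` measures how far `f` is from being differentiable at `x`. -/
structure IsExceptionalDatum (f : E → F) (x : E) (K γ ε δ : ℝ) {k : ℕ}
    (j : (Fin k → ℝ) →L[ℝ] E) (q : E →L[ℝ] (Fin k → ℝ)) (S : (Fin k → ℝ) →L[ℝ] F)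
    (R : E →L[ℝ] F) : Prop where
  left_inv : ∀ a, q (j a) = a
  norm_j_le : ‖j‖ ≤ K
  norm_q_le : ‖q‖ ≤ K
  norm_S_le : ‖S‖ ≤ K
  norm_R_le : ‖R‖ ≤ K
  lipschitz : ∀ y, ‖y - x‖ ≤ δ → ‖f y - f x‖ ≤ K * ‖y - x‖
  approx_j : ∀ a, ‖a‖ ≤ δ → ‖f (x + j a) - f x - S a‖ ≤ γ * ‖a‖
  approx_ker_q : ∀ w, q w = 0 → ‖w‖ ≤ δ → ‖f (x + w) - f x - R w‖ ≤ γ * ‖w‖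
  not_approx : ∀ η > 0, ∃ h, ‖h‖ ≤ η ∧
    ε * ‖h‖ < ‖f (x + h) - f x - (S (q h) + R (h - j (q h)))‖

variable {f : E → F} {x z : E} {K γ ε δ : ℝ} {k : ℕ} {j j' : (Fin k → ℝ) →L[ℝ] E}
  {q q' : E →L[ℝ] (Fin k → ℝ)} {S S' : (Fin k → ℝ) →L[ℝ] F} {R R' : E →L[ℝ] F}

theorem IsExceptionalDatum.mono (hx : IsExceptionalDatum f x K γ ε δ j q S R) {K' ε' δ' : ℝ}
    (hK : K ≤ K') (hε : ε' ≤ ε) (hδ : δ' ≤ δ) : IsExceptionalDatum f x K' γ ε' δ' j q S R where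
  left_inv := hx.left_inv
  norm_j_le := hx.norm_j_le.trans hK
  norm_q_le := hx.norm_q_le.trans hK
  norm_S_le := hx.norm_S_le.trans hK
  norm_R_le := hx.norm_R_le.trans hK
  lipschitz y hy := (hx.lipschitz y (hy.trans hδ)).trans (by gcongr)
  approx_j a ha := hx.approx_j a (ha.trans hδ)
  approx_ker_q w hw hw' := hx.approx_ker_q w hw (hw'.trans hδ)
  not_approx η hη := by
    obtain ⟨h, hh, hlt⟩ := hx.not_approx η hη
    exact ⟨h, hh, lt_of_le_of_lt (by gcongr) hlt⟩

/-- Going from `x + h` to `z` (Lipschitz at `z`), then to `z - j' a = x + w` (derivative along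
`j'` at `z`), then to `x` (derivative along `ker q` at `x`). -/
theorem IsExceptionalDatum.norm_sub_le_of_sub_eq {ε' : ℝ}
    (hx : IsExceptionalDatum f x K γ ε δ j q S R) (hz : IsExceptionalDatum f z K γ ε' δ j' q' S' R')
    {h w : E} {a : Fin k → ℝ} (hzw : z - j' a = x + w) (hqw : q w = 0)
    (hzh : ‖z - (x + h)‖ ≤ δ) (ha : ‖a‖ ≤ δ) (hw : ‖w‖ ≤ δ) :
    ‖f (x + h) - f x - (S (q h) + R (h - j (q h)))‖ ≤ K * ‖z - (x + h)‖ + γ * ‖a‖ + γ * ‖w‖ +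
      ‖S' a - S (q h)‖ + ‖R (w - (h - j (q h)))‖ := by
  have hident : f (x + h) - f x - (S (q h) + R (h - j (q h))) =
      (f (x + h) - f z) - (f (z + j' (-a)) - f z - S' (-a)) + (f (x + w) - f x - R w) +
        (S' a - S (q h)) + R (w - (h - j (q h))) := by
    rw [map_neg, ← sub_eq_add_neg, hzw, map_neg]
    simp only [map_sub]
    abel
  have h1 : ‖f (x + h) - f z‖ ≤ K * ‖z - (x + h)‖ := by
    have := hz.lipschitz (x + h) (by rwa [norm_sub_rev])
    rwa [norm_sub_rev (x + h)] at this
  have h2 := hz.approx_j (-a) (by rwa [norm_neg])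
  rw [norm_neg] at h2
  rw [hident]
  exact norm_add_le_of_le (norm_add_le_of_le (norm_add_le_of_le (norm_sub_le_of_le h1 h2)
    (hx.approx_ker_q w hqw hw)) le_rfl) le_rfl

theorem IsExceptionalDatum.norm_sub_le_of_norm_sub_le {ε' : ℝ}
    (hx : IsExceptionalDatum f x K γ ε δ j q S R) (hz : IsExceptionalDatum f z K γ ε' δ j' q' S' R')
    (hj : ‖j' - j‖ ≤ γ) (hS : ‖S' - S‖ ≤ γ) (hK : 1 ≤ K) (hγ : 0 ≤ γ) (hKγ : 2 * K * γ ≤ 1)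
    {h : E} (hzh : ‖z - (x + h)‖ ≤ γ * ‖h‖) (hh : 6 * K ^ 2 * ‖h‖ ≤ δ) :
    ‖f (x + h) - f x - (S (q h) + R (h - j (q h)))‖ ≤ 25 * K ^ 4 * γ * ‖h‖ := by
  obtain ⟨a, w, hsplit, hqw, ha, hav, hw, hww⟩ :=
    exists_decomposition_of_norm_sub_le hx.left_inv hx.norm_q_le hz.norm_j_le hj hK hγ hKγ hzh
  have hzw : z - j' a = x + w := by
    rw [show z = x + (h + (z - (x + h))) by abel, hsplit]; abel
  have hγh : 0 ≤ γ * ‖h‖ := mul_nonneg hγ (norm_nonneg h)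
  have hK2 : K ≤ K ^ 2 := by nlinarith
  have hhδ : ‖h‖ ≤ δ := le_trans (le_mul_of_one_le_left (norm_nonneg h) (by nlinarith)) hh
  have hzδ : ‖z - (x + h)‖ ≤ δ := hzh.trans (by nlinarith [norm_nonneg h])
  have haδ : ‖a‖ ≤ δ := ha.trans (by nlinarith [mul_le_mul_of_nonneg_right hK2 (norm_nonneg h)])
  have hS' : ‖S' a - S (q h)‖ ≤ γ * (4 * K * ‖h‖) + K * (4 * K ^ 2 * γ * ‖h‖) := by
    have hident : S' a - S (q h) = (S' - S) a + S (a - q h) := by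
      simp only [map_sub, FunLike.coe_sub, Pi.sub_apply]; abel
    rw [hident]
    exact norm_add_le_of_le ((S' - S).le_of_opNorm_le hS a |>.trans (by gcongr))
      (S.le_of_opNorm_le hx.norm_S_le _ |>.trans (by gcongr))
  have hR : ‖R (w - (h - j (q h)))‖ ≤ K * (6 * K ^ 3 * γ * ‖h‖) :=
    R.le_of_opNorm_le hx.norm_R_le _ |>.trans (by gcongr)
  have hpoly : 9 * K + 6 * K ^ 2 + 4 * K ^ 3 + 6 * K ^ 4 ≤ 25 * K ^ 4 := by
    nlinarith [pow_le_pow_right₀ hK (show 1 ≤ 4 by norm_num),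
      pow_le_pow_right₀ hK (show 2 ≤ 4 by norm_num), pow_le_pow_right₀ hK (show 3 ≤ 4 by norm_num)]
  refine (hx.norm_sub_le_of_sub_eq hz hzw hqw hzδ haδ (hw.trans hh)).trans ?_
  have hK0 : 0 ≤ K := by linarith
  nlinarith [mul_le_mul_of_nonneg_right hpoly hγh, mul_le_mul_of_nonneg_left hzh hK0,
    mul_le_mul_of_nonneg_left ha hγ, mul_le_mul_of_nonneg_left hw hγ]

end ExceptionalDatum

section Pieces

variable {E F : Type*} [NormedAddCommGroup E] [NormedSpace ℝ E] [NormedAddCommGroup F]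
  [NormedSpace ℝ F]

/-- `25 * K ^ 4` is the constant of `IsExceptionalDatum.norm_sub_le_of_norm_sub_le`. -/
noncomputable def tolerance (K ε : ℝ) : ℝ := ε / (25 * K ^ 4)

def exceptionalPiece (f : E → F) (K ε δ : ℝ) {k : ℕ}
    (c : ((Fin k → ℝ) →L[ℝ] E) × ((Fin k → ℝ) →L[ℝ] F)) : Set E :=
  {x | ∃ j q S R, dist (j, S) c < tolerance K ε / 2 ∧
    IsExceptionalDatum f x K (tolerance K ε) ε δ j q S R}

theorem porous_exceptionalPiece (f : E → F) {K ε δ : ℝ} {k : ℕ}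
    (c : ((Fin k → ℝ) →L[ℝ] E) × ((Fin k → ℝ) →L[ℝ] F)) (hK : 1 ≤ K) (hε : 0 < ε)
    (hε1 : ε ≤ 1) (hδ : 0 < δ) : Porous (exceptionalPiece f K ε δ c) := by
  rintro x ⟨j, q, S, R, hc, hx⟩
  set γ := tolerance K ε
  have hK4 : K ≤ K ^ 4 := le_self_pow₀ hK (by norm_num)
  have hγ : 0 < γ := div_pos hε (by positivity)
  have hγε : 25 * K ^ 4 * γ = ε := by
    simp only [γ, tolerance]; field_simp
  have hKγ : 2 * K * γ ≤ 1 := by nlinarith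
  refine ⟨γ, hγ, fun r hr => ?_⟩
  obtain ⟨h, hh, hlt⟩ := hx.not_approx (min (r / 2) (δ / (6 * K ^ 2))) (by positivity)
  have hh0 : h ≠ 0 := by
    rintro rfl
    simp at hlt
  have hhδ : 6 * K ^ 2 * ‖h‖ ≤ δ := by
    have := hh.trans (min_le_right _ _)
    rw [le_div_iff₀ (by positivity)] at this
    linarith
  refine ⟨x + h, ?_, by simpa using hh0, ?_⟩
  · rw [mem_ball, dist_self_add_left]
    linarith [hh.trans (min_le_left _ _)]
  · refine eq_empty_iff_forall_notMem.mpr fun z ⟨hz, j', q', S', R', hc', hz'⟩ => ?_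
    have hcc : dist (j', S') (j, S) < γ := by linarith [dist_triangle_right (j', S') (j, S) c]
    rw [Prod.dist_eq, max_lt_iff, dist_eq_norm, dist_eq_norm] at hcc
    rw [mem_ball, dist_self_add_left, dist_eq_norm] at hz
    have := hx.norm_sub_le_of_norm_sub_le hz' hcc.1.le hcc.2.le hK hγ.le hKγ hz.le hhδ
    rw [hγε] at this
    linarith

end Pieces

section Existence

variable {E F : Type*} [NormedAddCommGroup E] [NormedSpace ℝ E] [NormedAddCommGroup F]
  [NormedSpace ℝ F]

theorem HasFDerivAt.exists_forall_norm_sub_le {f : E → F} {f' : E →L[ℝ] F} {x : E}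
    (hf : HasFDerivAt f f' x) {γ : ℝ} (hγ : 0 < γ) :
    ∃ δ > 0, ∀ h, ‖h‖ ≤ δ → ‖f (x + h) - f x - f' h‖ ≤ γ * ‖h‖ := by
  have := (hasFDerivAt_iff_isLittleO_nhds_zero.mp hf).def hγ
  simpa only [mem_closedBall_zero_iff] using nhds_basis_closedBall.eventually_iff.mp this

theorem exists_forall_lt_norm_sub_of_not_hasFDerivAt {f : E → F} {f' : E →L[ℝ] F} {x : E}
    (hf : ¬ HasFDerivAt f f' x) :
    ∃ ε > 0, ∀ η > 0, ∃ h, ‖h‖ ≤ η ∧ ε * ‖h‖ < ‖f (x + h) - f x - f' h‖ := by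
  rw [hasFDerivAt_iff_isLittleO_nhds_zero, Asymptotics.isLittleO_iff] at hf
  push Not at hf
  obtain ⟨ε, hε, hfreq⟩ := hf
  refine ⟨ε, hε, fun η hη => ?_⟩
  obtain ⟨h, hlt, hh⟩ := (hfreq.and_eventually (closedBall_mem_nhds 0 hη)).exists
  exact ⟨h, mem_closedBall_zero_iff.mp hh, hlt⟩

theorem exists_isExceptionalDatum {f : E → F} {x : E} {V W : Submodule ℝ E}
    [FiniteDimensional ℝ V] (hW : IsClosed (W : Set E)) (hVW : IsCompl V W)
    (hfx : LipschitzAtPt f x) (hfV : FrechetDiffAlong f V x) (hfW : FrechetDiffAlong f W x)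
    (hf : ¬ DifferentiableAt ℝ f x) :
    ∃ (k : ℕ) (j : (Fin k → ℝ) →L[ℝ] E) (q : E →L[ℝ] (Fin k → ℝ)) (S : (Fin k → ℝ) →L[ℝ] F)
      (R : E →L[ℝ] F) (K ε : ℝ), 0 < ε ∧
        ∀ γ > 0, ∃ δ > 0, IsExceptionalDatum f x K γ ε δ j q S R := by
  obtain ⟨k, e, q, hqe, hker⟩ := exists_coordinates_of_isCompl hW hVW
  let j : (Fin k → ℝ) →L[ℝ] E := V.subtypeL ∘L (e : (Fin k → ℝ) →L[ℝ] V)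
  have hqj : ∀ a, q (j a) = a := hqe
  let πW : E →L[ℝ] W := (ContinuousLinearMap.id ℝ E - j ∘L q).codRestrict W
    fun u => (hker _).1 (by simp [hqj])
  let S := fderiv ℝ (fun v : V => f (x + v)) 0 ∘L (e : (Fin k → ℝ) →L[ℝ] V)
  let R := fderiv ℝ (fun w : W => f (x + w)) 0 ∘L πW
  have hS : HasFDerivAt (fun a => f (x + j a)) S 0 := by
    have hg : HasFDerivAt (fun v : V => f (x + v)) (fderiv ℝ (fun v : V => f (x + v)) 0) (e 0) :=
      by rw [map_zero]; exact hfV.hasFDerivAt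
    exact hg.comp 0 e.hasFDerivAt
  obtain ⟨L, hL⟩ := hfx
  obtain ⟨r, hr, hLr⟩ := nhds_basis_closedBall.eventually_iff.mp hL
  obtain ⟨ε, hε, hdefect⟩ := exists_forall_lt_norm_sub_of_not_hasFDerivAt
    (f' := S ∘L q + R ∘L (ContinuousLinearMap.id ℝ E - j ∘L q)) fun h => hf h.differentiableAt
  refine ⟨k, j, q, S, R, max (max ‖j‖ ‖q‖) (max (max ‖S‖ ‖R‖) L), ε, hε, fun γ hγ => ?_⟩
  obtain ⟨δ₁, hδ₁, hSδ⟩ := hS.exists_forall_norm_sub_le hγ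
  obtain ⟨δ₂, hδ₂, hRδ⟩ := hfW.hasFDerivAt.exists_forall_norm_sub_le hγ
  refine ⟨min r (min δ₁ δ₂), by positivity, ⟨hqj, by simp, by simp, by simp, by simp, ?_, ?_, ?_,
    fun η hη => by simpa using hdefect η hη⟩⟩
  · intro y hy
    have := hLr (mem_closedBall_iff_norm.mpr (hy.trans (min_le_left _ _)))
    exact this.trans (by gcongr; simp)
  · intro a ha
    simpa using hSδ a (ha.trans ((min_le_right _ _).trans (min_le_left _ _)))
  · intro w hw hwδ
    have hπ : πW w = ⟨w, (hker w).1 hw⟩ := Subtype.ext (by simp [πW, hw])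
    have := hRδ ⟨w, (hker w).1 hw⟩ (hwδ.trans ((min_le_right _ _).trans (min_le_right _ _)))
    simpa [R, hπ] using this

end Existence

section Covering

variable {E F : Type*} [NormedAddCommGroup E] [NormedSpace ℝ E] [NormedAddCommGroup F]
  [NormedSpace ℝ F]

def exceptionalSet (f : E → F) : Set E :=
  {x | LipschitzAtPt f x ∧
    (∃ V W : Submodule ℝ E, FiniteDimensional ℝ V ∧ IsClosed (W : Set E) ∧ IsCompl V W ∧
      FrechetDiffAlong f V x ∧ FrechetDiffAlong f W x) ∧
    ¬ DifferentiableAt ℝ f x}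

open TopologicalSpace in
theorem sigmaPorous_exceptionalSet [SeparableSpace E] [SeparableSpace F] (f : E → F) :
    SigmaPorous (exceptionalSet f) := by
  -- The piece with index `(k, K, n, m, i)` has dimension `k`, bound `K + 1`, `ε = 1 / (n + 1)`,
  -- `δ = 1 / (m + 1)`, and is centred at the `i`-th point of a dense sequence of data.
  let piece (p : ℕ × ℕ × ℕ × ℕ × ℕ) : Set E :=
    exceptionalPiece f ((p.2.1 : ℝ) + 1) (1 / ((p.2.2.1 : ℝ) + 1)) (1 / ((p.2.2.2.1 : ℝ) + 1))
      (denseSeq (((Fin p.1 → ℝ) →L[ℝ] E) × ((Fin p.1 → ℝ) →L[ℝ] F)) p.2.2.2.2)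
  refine (SigmaPorous.iUnion (B := piece) fun p => porous_exceptionalPiece f _ (by simp)
    (by positivity) (div_le_one_of_le₀ (by simp) (by positivity)) (by positivity)).mono ?_
  rintro x ⟨hfx, ⟨V, W, hV, hW, hVW, hfV, hfW⟩, hf⟩
  obtain ⟨k, j, q, S, R, K, ε, hε, hdatum⟩ := exists_isExceptionalDatum hW hVW hfx hfV hfW hf
  obtain ⟨K', hK'⟩ := exists_nat_ge K
  obtain ⟨n, hn⟩ := exists_nat_one_div_lt hε
  have hγ : 0 < tolerance ((K' : ℝ) + 1) (1 / ((n : ℝ) + 1)) := by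
    unfold tolerance; positivity
  obtain ⟨δ, hδ, hx⟩ := hdatum _ hγ
  obtain ⟨m, hm⟩ := exists_nat_one_div_lt hδ
  obtain ⟨i, hi⟩ := (denseRange_denseSeq _).exists_dist_lt (j, S) (half_pos hγ)
  exact mem_iUnion.2 ⟨(k, K', n, m, i), j, q, S, R, hi, hx.mono (by linarith) hn.le hm.le⟩

end Covering

theorem sigmaPorous_exceptional_set_finiteDim_and_complement_general
    [TopologicalSpace.SeparableSpace X] [TopologicalSpace.SeparableSpace Y]
    (G : Set X) (f : X → Y) :
    ∃ A : Set X, A ⊆ G ∧ SigmaPorous A ∧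
      ∀ x ∈ G \ A,
        (LipschitzAtPt f x ∧
         ∃ V W : Submodule ℝ X, FiniteDimensional ℝ V ∧ IsClosed (W : Set X) ∧
           IsCompl V W ∧ FrechetDiffAlong f V x ∧ FrechetDiffAlong f W x) →
        DifferentiableAt ℝ f x :=
  ⟨G ∩ exceptionalSet f, inter_subset_left, (sigmaPorous_exceptionalSet f).mono inter_subset_right,
    fun _ hx hfx => by_contra fun hf => hx.2 ⟨hx.1, hfx.1, hfx.2, hf⟩⟩

theorem sigmaPorous_exceptional_set_finiteDim_and_complement
    [TopologicalSpace.SeparableSpace X] [TopologicalSpace.SeparableSpace Y]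
    (G : Set X) (hG : IsOpen G) (f : X → Y) :
    ∃ A : Set X, A ⊆ G ∧ SigmaPorous A ∧
      ∀ x ∈ G \ A,
        (LipschitzAtPt f x ∧
         ∃ V W : Submodule ℝ X, FiniteDimensional ℝ V ∧ IsClosed (W : Set X) ∧
           IsCompl V W ∧ FrechetDiffAlong f V x ∧ FrechetDiffAlong f W x) →
        DifferentiableAt ℝ f x :=
  sigmaPorous_exceptional_set_finiteDim_and_complement_general G f
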